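/- arXiv:1710.06281 — 6 statements merged into one kernel-verified Lean document; each statement's English description precedes it below -/
import Mathlib

section
/- The sequence {δ_n} is well defined and satisfies 0 < δ_{n+1} < δ_n ≤ δ₀ for every n ≥ 0, and lim_{n→∞} δ_n = 0. -/
open Set Filter Topology

/-!
Put `g := ψ₂ - ψ₁`. Since `|g'| ≤ |ψ₁'| + |ψ₂'| < 1` and `g 0 = 0`, the mean value theorem
gives `0 < g x < x` on `(0, δ₀]`, so the step map `x ↦ x - g x` sends `(0, δ₀]` into itself
and strictly decreases. The sequence therefore decreases to some `L ∈ [0, δ₀]`; by continuity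
`L` is a fixed point of the step map, i.e. `g L = 0`, which forces `L = 0`.
-/

lemma deriv_sub_lt_one_of_abs_derivWithin_lt_half {ψ₁ ψ₂ : ℝ → ℝ} {s : Set ℝ}
    {x : ℝ} (hs : s ∈ 𝓝 x) (h₁ : DifferentiableWithinAt ℝ ψ₁ s x)
    (h₂ : DifferentiableWithinAt ℝ ψ₂ s x) (hψ₁' : |derivWithin ψ₁ s x| < 1 / 2)
    (hψ₂' : |derivWithin ψ₂ s x| < 1 / 2) :
    deriv (fun y => ψ₂ y - ψ₁ y) x < 1 := by
  rw [derivWithin_of_mem_nhds hs] at hψ₁' hψ₂'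
  rw [deriv_fun_sub (h₂.differentiableAt hs) (h₁.differentiableAt hs)]
  linarith [le_abs_self (deriv ψ₂ x), neg_abs_le (deriv ψ₁ x)]

lemma sub_lt_self_of_abs_derivWithin_lt_half {ψ₁ ψ₂ : ℝ → ℝ} {b : ℝ}
    (h₁ : DifferentiableOn ℝ ψ₁ (Icc 0 b)) (h₂ : DifferentiableOn ℝ ψ₂ (Icc 0 b))
    (h0 : ψ₁ 0 = ψ₂ 0)
    (hψ₁' : ∀ x ∈ Ioo 0 b, |derivWithin ψ₁ (Icc 0 b) x| < 1 / 2)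
    (hψ₂' : ∀ x ∈ Ioo 0 b, |derivWithin ψ₂ (Icc 0 b) x| < 1 / 2)
    {x : ℝ} (hx : x ∈ Ioc 0 b) :
    ψ₂ x - ψ₁ x < x := by
  have hg := h₂.sub h₁
  have hderiv : ∀ y ∈ interior (Icc 0 b), deriv (fun y => ψ₂ y - ψ₁ y) y < 1 := by
    rw [interior_Icc]
    intro y hy
    have hs : Icc 0 b ∈ 𝓝 y := Icc_mem_nhds hy.1 hy.2
    exact deriv_sub_lt_one_of_abs_derivWithin_lt_half hs (h₁ y (Ioo_subset_Icc_self hy))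
      (h₂ y (Ioo_subset_Icc_self hy)) (hψ₁' y hy) (hψ₂' y hy)
  have := (convex_Icc 0 b).image_sub_lt_mul_sub_of_deriv_lt hg.continuousOn
    (hg.mono interior_subset) hderiv 0 ⟨le_rfl, hx.1.le.trans hx.2⟩ x (Ioc_subset_Icc_self hx)
    hx.1
  simpa [h0] using this

section Descent

variable {T : ℝ → ℝ} {b : ℝ} {u : ℕ → ℝ}

lemma mem_Ioc_of_lt_self (hT : ∀ x ∈ Ioc 0 b, 0 < T x ∧ T x < x) (hu0 : u 0 ∈ Ioc 0 b)
    (hu : ∀ n, u (n + 1) = T (u n)) (n : ℕ) : u n ∈ Ioc 0 b := by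
  induction n with
  | zero => exact hu0
  | succ n ih =>
    rw [hu n]
    exact ⟨(hT _ ih).1, (hT _ ih).2.le.trans ih.2⟩

lemma tendsto_zero_of_lt_self (hTc : ContinuousOn T (Icc 0 b))
    (hT : ∀ x ∈ Ioc 0 b, 0 < T x ∧ T x < x) (hu0 : u 0 ∈ Ioc 0 b)
    (hu : ∀ n, u (n + 1) = T (u n)) : Tendsto u atTop (𝓝 0) := by
  have hmem := mem_Ioc_of_lt_self hT hu0 hu
  have hanti : Antitone u := antitone_nat_of_succ_le fun n => by
    rw [hu n]
    exact (hT _ (hmem n)).2.le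
  have hbdd : BddBelow (range u) := ⟨0, by rintro _ ⟨n, rfl⟩; exact (hmem n).1.le⟩
  set L := ⨅ n, u n
  have hL : Tendsto u atTop (𝓝 L) := tendsto_atTop_ciInf hanti hbdd
  have hLmem : L ∈ Icc 0 b :=
    isClosed_Icc.mem_of_tendsto hL (Eventually.of_forall fun n => Ioc_subset_Icc_self (hmem n))
  have hfixed : T L = L := by
    refine tendsto_nhds_unique ?_ ((tendsto_add_atTop_iff_nat 1).2 hL)
    simp only [hu]
    exact (hTc L hLmem).tendsto.comp (tendsto_nhdsWithin_iff.2
      ⟨hL, Eventually.of_forall fun n => Ioc_subset_Icc_self (hmem n)⟩)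
  obtain hL0 | hL0 := hLmem.1.eq_or_lt
  · rwa [← hL0] at hL
  · exact absurd hfixed (hT L ⟨hL0, hLmem.2⟩).2.ne

end Descent

/-- The sequence `{δ n}` defined by `δ 0 = δ₀`, `q n = (ψ₂ - ψ₁)(δ n)`,
`δ (n+1) = δ n - q n` is well defined: it satisfies `0 < δ (n+1) < δ n ≤ δ₀`
for every `n`, and `δ n → 0`. -/
theorem cusp_scale_sequence_well_defined
    (δ₀ : ℝ) (hδ₀ : 0 < δ₀)
    (ψ₁ ψ₂ : ℝ → ℝ)
    (hψ₁C1 : ContDiffOn ℝ 1 ψ₁ (Icc 0 δ₀))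
    (hψ₂C1 : ContDiffOn ℝ 1 ψ₂ (Icc 0 δ₀))
    (hψ₁0 : ψ₁ 0 = 0) (hψ₂0 : ψ₂ 0 = 0)
    (hlt : ∀ x ∈ Ioc 0 δ₀, ψ₁ x < ψ₂ x)
    (hψ₁' : ∀ x ∈ Icc 0 δ₀, |derivWithin ψ₁ (Icc 0 δ₀) x| < 1 / 2)
    (hψ₂' : ∀ x ∈ Icc 0 δ₀, |derivWithin ψ₂ (Icc 0 δ₀) x| < 1 / 2)
    (δ : ℕ → ℝ)
    (hδ0 : δ 0 = δ₀)
    (hδrec : ∀ n, δ (n + 1) = δ n - (ψ₂ (δ n) - ψ₁ (δ n))) :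
    (∀ n, 0 < δ (n + 1) ∧ δ (n + 1) < δ n ∧ δ n ≤ δ₀) ∧
      Tendsto δ atTop (𝓝 0) := by
  have hd₁ := hψ₁C1.differentiableOn one_ne_zero
  have hd₂ := hψ₂C1.differentiableOn one_ne_zero
  have hstep : ∀ x ∈ Ioc 0 δ₀, 0 < x - (ψ₂ x - ψ₁ x) ∧ x - (ψ₂ x - ψ₁ x) < x := fun x hx =>
    ⟨sub_pos.2 (sub_lt_self_of_abs_derivWithin_lt_half hd₁ hd₂ (hψ₁0.trans hψ₂0.symm)
      (fun y hy => hψ₁' y (Ioo_subset_Icc_self hy))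
      (fun y hy => hψ₂' y (Ioo_subset_Icc_self hy)) hx),
      sub_lt_self _ (sub_pos.2 (hlt x hx))⟩
  have hδ0mem : δ 0 ∈ Ioc 0 δ₀ := by rw [hδ0]; exact ⟨hδ₀, le_rfl⟩
  have hmem := mem_Ioc_of_lt_self hstep hδ0mem hδrec
  refine ⟨fun n => ⟨(hmem (n + 1)).1, hδrec n ▸ (hstep _ (hmem n)).2, (hmem n).2⟩,
    ?_⟩
  exact tendsto_zero_of_lt_self (continuousOn_id.sub (hd₂.continuousOn.sub hd₁.continuousOn))
    hstep hδ0mem hδrec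
end

section
/- lim_{n→∞} q_n / δ_n = 0. -/
/-!
By the mean value theorem the derivative bounds give `0 < ψ₂ x - ψ₁ x < x` on `(0, δ₀]`, so `δ`
is a decreasing sequence of positive numbers. Its limit `L` satisfies `(ψ₂ - ψ₁)(L) = 0` by
continuity, hence `L = 0`, and `δ n → 0⁺` turns the cusp condition into the claim.
-/

open Set Filter Topology

theorem sub_lt_of_abs_derivWithin_lt_half {ψ₁ ψ₂ : ℝ → ℝ} {a : ℝ}
    (h₁ : DifferentiableOn ℝ ψ₁ (Icc 0 a)) (h₂ : DifferentiableOn ℝ ψ₂ (Icc 0 a))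
    (h0 : ψ₁ 0 = ψ₂ 0)
    (hψ₁' : ∀ x ∈ Ioo 0 a, |derivWithin ψ₁ (Icc 0 a) x| < 1 / 2)
    (hψ₂' : ∀ x ∈ Ioo 0 a, |derivWithin ψ₂ (Icc 0 a) x| < 1 / 2) :
    ∀ x ∈ Ioc 0 a, ψ₂ x - ψ₁ x < x := by
  intro x hx
  have hderiv : ∀ y ∈ interior (Icc 0 a), deriv (fun y => ψ₂ y - ψ₁ y) y < 1 := by
    rw [interior_Icc]
    intro y hy
    have hIcc : Icc 0 a ∈ 𝓝 y := Icc_mem_nhds hy.1 hy.2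
    have hd₁ := (h₁ y (Ioo_subset_Icc_self hy)).differentiableAt hIcc
    have hd₂ := (h₂ y (Ioo_subset_Icc_self hy)).differentiableAt hIcc
    rw [deriv_fun_sub hd₂ hd₁, ← derivWithin_of_mem_nhds hIcc, ← derivWithin_of_mem_nhds hIcc]
    linarith [abs_lt.mp (hψ₁' y hy), abs_lt.mp (hψ₂' y hy)]
  have hdiff : DifferentiableOn ℝ (fun y => ψ₂ y - ψ₁ y) (interior (Icc 0 a)) :=
    (h₂.sub h₁).mono interior_subset
  have := (convex_Icc 0 a).image_sub_lt_mul_sub_of_deriv_lt (h₂.continuousOn.sub h₁.continuousOn)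
    hdiff hderiv 0 ⟨le_rfl, hx.1.le.trans hx.2⟩ x (Ioc_subset_Icc_self hx) hx.1
  simpa [h0] using this

section SubtractiveIteration

variable {g : ℝ → ℝ} {a : ℝ} {δ : ℕ → ℝ}

theorem mem_Ioc_of_succ_eq_sub (hpos : ∀ x ∈ Ioc 0 a, 0 < g x) (hlt : ∀ x ∈ Ioc 0 a, g x < x)
    (h0 : δ 0 ∈ Ioc 0 a) (hrec : ∀ n, δ (n + 1) = δ n - g (δ n)) (n : ℕ) : δ n ∈ Ioc 0 a := by
  induction n with
  | zero => exact h0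
  | succ n ih =>
    rw [hrec]
    constructor <;> linarith [hpos _ ih, hlt _ ih, ih.2]

theorem antitone_of_succ_eq_sub (hpos : ∀ x ∈ Ioc 0 a, 0 < g x) (hmem : ∀ n, δ n ∈ Ioc 0 a)
    (hrec : ∀ n, δ (n + 1) = δ n - g (δ n)) : Antitone δ :=
  antitone_nat_of_succ_le fun n => by rw [hrec]; linarith [hpos _ (hmem n)]

theorem tendsto_nhdsGT_zero_of_succ_eq_sub (hpos : ∀ x ∈ Ioc 0 a, 0 < g x)
    (hlt : ∀ x ∈ Ioc 0 a, g x < x) (hcont : ContinuousOn g (Ioc 0 a)) (h0 : δ 0 ∈ Ioc 0 a)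
    (hrec : ∀ n, δ (n + 1) = δ n - g (δ n)) : Tendsto δ atTop (𝓝[>] 0) := by
  have hmem := mem_Ioc_of_succ_eq_sub hpos hlt h0 hrec
  have hbdd : BddBelow (range δ) := ⟨0, by rintro _ ⟨n, rfl⟩; exact (hmem n).1.le⟩
  have hδL : Tendsto δ atTop (𝓝 (⨅ n, δ n)) :=
    tendsto_atTop_ciInf (antitone_of_succ_eq_sub hpos hmem hrec) hbdd
  set L := ⨅ n, δ n
  have hL0 : L = 0 := by
    by_contra hL
    have hLmem : L ∈ Ioc 0 a :=
      ⟨(le_ciInf fun n => (hmem n).1.le).lt_of_ne' hL, (ciInf_le hbdd 0).trans h0.2⟩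
    have hgL : Tendsto (fun n => g (δ n)) atTop (𝓝 (g L)) :=
      (hcont L hLmem).tendsto.comp
        (tendsto_nhdsWithin_of_tendsto_nhds_of_eventually_within δ hδL (.of_forall hmem))
    -- `g (δ n) = δ n - δ (n + 1)` is the difference of two sequences with the same limit.
    have hg0 : Tendsto (fun n => g (δ n)) atTop (𝓝 0) := by
      have := hδL.sub (hδL.comp (tendsto_add_atTop_nat 1))
      rw [sub_self] at this
      exact this.congr fun n => by simp [hrec]
    exact (hpos L hLmem).ne' (tendsto_nhds_unique hgL hg0)
  rw [← hL0]
  exact tendsto_nhdsWithin_of_tendsto_nhds_of_eventually_within δ hδL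
    (.of_forall fun n => hL0 ▸ (hmem n).1)

end SubtractiveIteration

/-- Under the cusp condition `(ψ₂ - ψ₁)(x)/x → 0` as `x → 0⁺`, the sequence
`q n / δ n → 0`, where `q n = (ψ₂ - ψ₁)(δ n)` and `δ (n+1) = δ n - q n`. -/
theorem cusp_scale_ratio_tendsto_zero
    (δ₀ : ℝ) (hδ₀ : 0 < δ₀)
    (ψ₁ ψ₂ : ℝ → ℝ)
    (hψ₁C1 : ContDiffOn ℝ 1 ψ₁ (Icc 0 δ₀))
    (hψ₂C1 : ContDiffOn ℝ 1 ψ₂ (Icc 0 δ₀))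
    (hψ₁0 : ψ₁ 0 = 0) (hψ₂0 : ψ₂ 0 = 0)
    (hlt : ∀ x ∈ Ioc 0 δ₀, ψ₁ x < ψ₂ x)
    (hψ₁' : ∀ x ∈ Icc 0 δ₀, |derivWithin ψ₁ (Icc 0 δ₀) x| < 1 / 2)
    (hψ₂' : ∀ x ∈ Icc 0 δ₀, |derivWithin ψ₂ (Icc 0 δ₀) x| < 1 / 2)
    (hcusp : Tendsto (fun x => (ψ₂ x - ψ₁ x) / x) (𝓝[>] (0 : ℝ)) (𝓝 0))
    (δ : ℕ → ℝ)
    (hδ0 : δ 0 = δ₀)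
    (hδrec : ∀ n, δ (n + 1) = δ n - (ψ₂ (δ n) - ψ₁ (δ n))) :
    Tendsto (fun n => (ψ₂ (δ n) - ψ₁ (δ n)) / δ n) atTop (𝓝 0) := by
  have h₁ := hψ₁C1.differentiableOn one_ne_zero
  have h₂ := hψ₂C1.differentiableOn one_ne_zero
  have hgap_lt : ∀ x ∈ Ioc 0 δ₀, ψ₂ x - ψ₁ x < x :=
    sub_lt_of_abs_derivWithin_lt_half h₁ h₂ (hψ₁0.trans hψ₂0.symm)
      (fun x hx => hψ₁' x (Ioo_subset_Icc_self hx)) (fun x hx => hψ₂' x (Ioo_subset_Icc_self hx))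
  have hgap_cont : ContinuousOn (fun x => ψ₂ x - ψ₁ x) (Ioc 0 δ₀) :=
    (h₂.continuousOn.sub h₁.continuousOn).mono Ioc_subset_Icc_self
  exact hcusp.comp <| tendsto_nhdsGT_zero_of_succ_eq_sub (fun x hx => sub_pos.mpr (hlt x hx))
    hgap_lt hgap_cont (by rw [hδ0]; exact ⟨hδ₀, le_rfl⟩) hδrec
end

section
/- For every compact set K ⊂ ℝ there is N such that for all n ≥ N and all u ∈ K one has q_n u + δ_{n+1} ∈ (0, δ₀), and moreover lim_{n→∞} sup_{u∈K} |ψ₁(q_n u + δ_{n+1})/q_n − L| = 0. -/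
open Set Filter Topology

/-!
Since `|ψᵢ'| < 1/2`, the gap `q = ψ₂ - ψ₁` satisfies `0 < q(x) < x` on `(0, δ₀]`, so `δₙ` decreases
to a limit where the gap vanishes, i.e. to `0`. The points `q_n u + δ_{n+1} = δₙ + qₙ (u - 1)`
lie within `O(qₙ) = o(δₙ)` of `δₙ`, hence in `(0, δ₀)`. Finally `ψ₁(x)/x → L · 0`, so
`ψ₁'(0) = 0`, and by continuity of `ψ₁'` the function `ψ₁` is `ε`-Lipschitz near `0`; thus
`ψ₁(q_n u + δ_{n+1})/qₙ` differs from `ψ₁(δₙ)/qₙ → L` by at most `ε · sup_K |u - 1|`.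
-/

lemma abs_sub_le_mul_of_abs_derivWithin_le {f : ℝ → ℝ} {s t : Set ℝ} {C : ℝ}
    (hf : DifferentiableOn ℝ f t) (hst : s ⊆ t) (hs : Convex ℝ s)
    (hC : ∀ x ∈ s, |derivWithin f t x| ≤ C) {x y : ℝ} (hx : x ∈ s) (hy : y ∈ s) :
    |f y - f x| ≤ C * |y - x| :=
  hs.norm_image_sub_le_of_norm_hasDerivWithin_le
    (fun z hz => (hf z (hst hz)).hasDerivWithinAt.mono hst) hC hx hy

section IntervalFromZero

variable {f : ℝ → ℝ} {a : ℝ}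

lemma abs_lt_mul_of_abs_derivWithin_lt {b : ℝ} (ha : 0 < a) (hf : ContDiffOn ℝ 1 f (Icc 0 a))
    (hf0 : f 0 = 0) (hf' : ∀ x ∈ Icc 0 a, |derivWithin f (Icc 0 a) x| < b) {x : ℝ}
    (hx : x ∈ Ioc 0 a) : |f x| < b * x := by
  obtain ⟨z, hz, hmax⟩ := isCompact_Icc.exists_isMaxOn (nonempty_Icc.2 ha.le)
    (hf.continuousOn_derivWithin (uniqueDiffOn_Icc ha) le_rfl).abs
  have hlip := abs_sub_le_mul_of_abs_derivWithin_le (hf.differentiableOn one_ne_zero)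
    Subset.rfl (convex_Icc 0 a) hmax (left_mem_Icc.2 ha.le) (Ioc_subset_Icc_self hx)
  rw [hf0, sub_zero, sub_zero, abs_of_pos hx.1] at hlip
  exact hlip.trans_lt (mul_lt_mul_of_pos_right (hf' z hz) hx.1)

lemma derivWithin_Icc_left_eq_zero (ha : 0 < a) (hf : DifferentiableWithinAt ℝ f (Icc 0 a) 0)
    (hf0 : f 0 = 0) (hlim : Tendsto (fun x => f x / x) (𝓝[>] 0) (𝓝 0)) :
    derivWithin f (Icc 0 a) 0 = 0 := by
  have hd := hf.hasDerivWithinAt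
  rw [hasDerivWithinAt_iff_tendsto_slope, Icc_sdiff_left, nhdsWithin_Ioc_eq_nhdsGT ha] at hd
  refine tendsto_nhds_unique hd (hlim.congr fun x => ?_)
  rw [slope_def_field, hf0, sub_zero, sub_zero]

lemma exists_abs_sub_le_of_derivWithin_eq_zero {ε : ℝ} (ha : 0 < a)
    (hf : ContDiffOn ℝ 1 f (Icc 0 a)) (hf'0 : derivWithin f (Icc 0 a) 0 = 0) (hε : 0 < ε) :
    ∃ η > 0, ∀ x ∈ Icc 0 η, ∀ y ∈ Icc 0 η, |f y - f x| ≤ ε * |y - x| := by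
  have hcont := hf.continuousOn_derivWithin (uniqueDiffOn_Icc ha) le_rfl 0 (left_mem_Icc.2 ha.le)
  rw [ContinuousWithinAt, hf'0] at hcont
  obtain ⟨r, hr, hball⟩ :=
    Metric.mem_nhdsWithin_iff.mp (hcont (Metric.closedBall_mem_nhds 0 hε))
  have hsub : Icc 0 (min (r / 2) a) ⊆ Icc 0 a := Icc_subset_Icc le_rfl (min_le_right _ _)
  refine ⟨min (r / 2) a, by positivity, fun x hx y hy =>
    abs_sub_le_mul_of_abs_derivWithin_le (hf.differentiableOn one_ne_zero) hsub (convex_Icc _ _)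
      (fun z hz => ?_) hx hy⟩
  have hzr : z < r := by linarith [hz.2.trans (min_le_left _ _)]
  have hz' : z ∈ Metric.ball 0 r ∩ Icc 0 a :=
    ⟨by rwa [mem_ball_zero_iff, Real.norm_eq_abs, abs_of_nonneg hz.1], hsub hz⟩
  simpa using hball hz'

end IntervalFromZero

section SubtractiveRecurrence

variable {a : ℝ} {g : ℝ → ℝ} {δ : ℕ → ℝ}

lemma mem_Ioc_of_sub_recurrence (hg : ∀ x ∈ Ioc 0 a, g x ∈ Ioo 0 x) (h0 : δ 0 ∈ Ioc 0 a)
    (hrec : ∀ n, δ (n + 1) = δ n - g (δ n)) : ∀ n, δ n ∈ Ioc 0 a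
  | 0 => h0
  | n + 1 => by
    have hn := mem_Ioc_of_sub_recurrence hg h0 hrec n
    have hgn := hg _ hn
    rw [hrec]
    constructor <;> linarith [hn.2, hgn.1, hgn.2]

lemma tendsto_zero_of_sub_recurrence (hg : ContinuousOn g (Icc 0 a))
    (hpos : ∀ x ∈ Ioc 0 a, 0 < g x) (hδ : ∀ n, δ n ∈ Ioc 0 a)
    (hrec : ∀ n, δ (n + 1) = δ n - g (δ n)) : Tendsto δ atTop (𝓝 0) := by
  have hanti : Antitone δ :=
    antitone_nat_of_succ_le fun n => by rw [hrec]; linarith [hpos _ (hδ n)]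
  have hbdd : BddBelow (range δ) := ⟨0, forall_mem_range.2 fun n => (hδ n).1.le⟩
  have hlim : Tendsto δ atTop (𝓝 (⨅ n, δ n)) := tendsto_atTop_ciInf hanti hbdd
  set c := ⨅ n, δ n
  have hδIcc : ∀ᶠ n in atTop, δ n ∈ Icc 0 a := Eventually.of_forall fun n => Ioc_subset_Icc_self (hδ n)
  have hc : c ∈ Icc 0 a := isClosed_Icc.mem_of_tendsto hlim hδIcc
  -- `g (δ n) = δ n - δ (n + 1)` tends both to `g c` and to `c - c`
  have hgc : Tendsto (fun n => g (δ n)) atTop (𝓝 (g c)) :=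
    (hg c hc).tendsto.comp (tendsto_nhdsWithin_iff.2 ⟨hlim, hδIcc⟩)
  have hcc : Tendsto (fun n => g (δ n)) atTop (𝓝 (c - c)) :=
    (hlim.sub (hlim.comp (tendsto_add_atTop_nat 1))).congr fun n => by
      simp only [Function.comp_apply, hrec]; ring
  have hgc0 : g c = 0 := by rw [tendsto_nhds_unique hgc hcc, sub_self]
  have hc0 : c = 0 := by
    by_contra hne
    exact (hpos c ⟨lt_of_le_of_ne hc.1 (Ne.symm hne), hc.2⟩).ne' hgc0
  rwa [hc0] at hlim

end SubtractiveRecurrence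

section Rescaling

variable {ι α : Type*} {l : Filter ι} {t s : ι → ℝ} {x : ι → α → ℝ} {K : Set α} {C : ℝ}

lemma eventually_mem_Ioo_of_abs_sub_le {η : ℝ} (ht : Tendsto t l (𝓝[>] 0))
    (hst : Tendsto (fun n => s n / t n) l (𝓝 0)) (hx : ∀ n, ∀ u ∈ K, |x n u - t n| ≤ C * s n)
    (hη : 0 < η) : ∀ᶠ n in l, ∀ u ∈ K, x n u ∈ Ioo 0 η := by
  have hC : ∀ᶠ n in l, C * (s n / t n) < 1 / 2 := by
    refine (hst.const_mul C).eventually_lt_const ?_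
    norm_num
  filter_upwards [ht (Ioo_mem_nhdsGT (half_pos hη)), hC] with n htn hCn u hu
  have hCs : C * s n < t n / 2 := by
    have hcancel : C * (s n / t n) * t n = C * s n := by field_simp [htn.1.ne']
    nlinarith [htn.1]
  have hxt := abs_le.1 ((hx n u hu).trans hCs.le)
  constructor <;> linarith [htn.1, htn.2]

lemma tendstoUniformlyOn_div_of_abs_sub_le {f : ℝ → ℝ} {a L : ℝ} (ha : 0 < a)
    (hf : ContDiffOn ℝ 1 f (Icc 0 a)) (hf'0 : derivWithin f (Icc 0 a) 0 = 0)
    (ht : Tendsto t l (𝓝[>] 0)) (hs : ∀ n, 0 < s n) (hst : Tendsto (fun n => s n / t n) l (𝓝 0))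
    (hL : Tendsto (fun n => f (t n) / s n) l (𝓝 L))
    (hx : ∀ n, ∀ u ∈ K, |x n u - t n| ≤ C * s n) :
    TendstoUniformlyOn (fun n u => f (x n u) / s n) (fun _ => L) l K := by
  rw [Metric.tendstoUniformlyOn_iff]
  intro ε hε
  obtain ⟨ε', hε', hCε'⟩ := exists_pos_mul_lt (half_pos hε) C
  obtain ⟨η, hη, hlip⟩ := exists_abs_sub_le_of_derivWithin_eq_zero ha hf hf'0 hε'
  filter_upwards [eventually_mem_Ioo_of_abs_sub_le ht hst hx hη, ht (Ioo_mem_nhdsGT hη),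
    hL.eventually (Metric.ball_mem_nhds L (half_pos hε))] with n hxn htn hLn u hu
  have hsn := hs n
  have hdiff : |f (x n u) - f (t n)| ≤ ε' * (C * s n) :=
    (hlip _ (Ioo_subset_Icc_self htn) _ (Ioo_subset_Icc_self (hxn u hu))).trans
      (mul_le_mul_of_nonneg_left (hx n u hu) hε'.le)
  rw [Real.dist_eq] at hLn
  rw [Real.dist_eq, abs_sub_comm]
  calc |f (x n u) / s n - L| = |(f (x n u) - f (t n)) / s n + (f (t n) / s n - L)| := by
        congr 1; field_simp; ring
    _ ≤ |f (x n u) - f (t n)| / s n + |f (t n) / s n - L| :=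
        (abs_add_le _ _).trans_eq (by rw [abs_div, abs_of_pos hsn])
    _ < ε / 2 + ε / 2 := by
        refine add_lt_add_of_le_of_lt ?_ hLn
        rw [div_le_iff₀ hsn]
        calc |f (x n u) - f (t n)| ≤ ε' * (C * s n) := hdiff
          _ = C * ε' * s n := by ring
          _ ≤ ε / 2 * s n := by gcongr
    _ = ε := add_halves ε

end Rescaling

lemma tendsto_iSup_abs_sub_of_tendstoUniformlyOn {ι α : Type*} {l : Filter ι} {F : ι → α → ℝ}
    {L : ℝ} {K : Set α} (h : TendstoUniformlyOn F (fun _ => L) l K) :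
    Tendsto (fun n => ⨆ u ∈ K, |F n u - L|) l (𝓝 0) := by
  rw [Metric.tendstoUniformlyOn_iff] at h
  refine Metric.tendsto_nhds.2 fun ε hε => ?_
  filter_upwards [h (ε / 2) (half_pos hε)] with n hn
  have hnn : 0 ≤ ⨆ u ∈ K, |F n u - L| :=
    Real.iSup_nonneg fun u => Real.iSup_nonneg fun _ => abs_nonneg _
  have hle : ⨆ u ∈ K, |F n u - L| ≤ ε / 2 :=
    Real.iSup_le (fun u => Real.iSup_le (fun hu => by
      rw [abs_sub_comm]; exact (hn u hu).le) (half_pos hε).le) (half_pos hε).le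
  rw [Real.dist_eq, sub_zero, abs_of_nonneg hnn]
  linarith

/-- The rescaled lower boundary `u ↦ ψ₁(q_n u + δ_{n+1})/q_n` converges
uniformly on compact sets to the constant `L`: for every compact `K ⊆ ℝ`
eventually `q_n u + δ_{n+1} ∈ (0, δ₀)` for all `u ∈ K`, and
`sup_{u ∈ K} |ψ₁(q_n u + δ_{n+1})/q_n - L| → 0`. -/
theorem rescaled_lower_boundary_tendsto
    (δ₀ : ℝ) (hδ₀ : 0 < δ₀)
    (ψ₁ ψ₂ : ℝ → ℝ)
    (hψ₁C1 : ContDiffOn ℝ 1 ψ₁ (Icc 0 δ₀))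
    (hψ₂C1 : ContDiffOn ℝ 1 ψ₂ (Icc 0 δ₀))
    (hψ₁0 : ψ₁ 0 = 0) (hψ₂0 : ψ₂ 0 = 0)
    (hlt : ∀ x ∈ Ioc 0 δ₀, ψ₁ x < ψ₂ x)
    (hψ₁' : ∀ x ∈ Icc 0 δ₀, |derivWithin ψ₁ (Icc 0 δ₀) x| < 1 / 2)
    (hψ₂' : ∀ x ∈ Icc 0 δ₀, |derivWithin ψ₂ (Icc 0 δ₀) x| < 1 / 2)
    (hcusp : Tendsto (fun x => (ψ₂ x - ψ₁ x) / x) (𝓝[>] (0 : ℝ)) (𝓝 0))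
    (L : ℝ)
    (hL : Tendsto (fun x => ψ₁ x / (ψ₂ x - ψ₁ x)) (𝓝[>] (0 : ℝ)) (𝓝 L))
    (δ : ℕ → ℝ) (q : ℕ → ℝ)
    (hδ0 : δ 0 = δ₀)
    (hq : ∀ n, q n = ψ₂ (δ n) - ψ₁ (δ n))
    (hδrec : ∀ n, δ (n + 1) = δ n - q n) :
    ∀ K : Set ℝ, IsCompact K →
      (∃ N : ℕ, ∀ n ≥ N, ∀ u ∈ K, q n * u + δ (n + 1) ∈ Ioo 0 δ₀) ∧
        Tendsto (fun n => ⨆ u ∈ K, |ψ₁ (q n * u + δ (n + 1)) / q n - L|)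
          atTop (𝓝 0) := by
  intro K hK
  have hgap : ∀ x ∈ Ioc 0 δ₀, ψ₂ x - ψ₁ x ∈ Ioo 0 x := fun x hx => by
    have h₁ := abs_lt.1 (abs_lt_mul_of_abs_derivWithin_lt hδ₀ hψ₁C1 hψ₁0 hψ₁' hx)
    have h₂ := abs_lt.1 (abs_lt_mul_of_abs_derivWithin_lt hδ₀ hψ₂C1 hψ₂0 hψ₂' hx)
    exact ⟨sub_pos.2 (hlt x hx), by linarith [h₁.1, h₂.2]⟩
  have hrec : ∀ n, δ (n + 1) = δ n - (ψ₂ (δ n) - ψ₁ (δ n)) := fun n => by rw [hδrec, hq]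
  have hmem := mem_Ioc_of_sub_recurrence hgap (by rw [hδ0]; exact right_mem_Ioc.2 hδ₀) hrec
  have hqpos : ∀ n, 0 < q n := fun n => hq n ▸ (hgap _ (hmem n)).1
  have hδlim : Tendsto δ atTop (𝓝[>] 0) := tendsto_nhdsWithin_iff.2
    ⟨tendsto_zero_of_sub_recurrence (hψ₂C1.continuousOn.sub hψ₁C1.continuousOn)
      (fun x hx => (hgap x hx).1) hmem hrec, Eventually.of_forall fun n => (hmem n).1⟩
  have hqδ : Tendsto (fun n => q n / δ n) atTop (𝓝 0) := by
    simpa only [hq, Function.comp_def] using hcusp.comp hδlim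
  have hLδ : Tendsto (fun n => ψ₁ (δ n) / q n) atTop (𝓝 L) := by
    simpa only [hq, Function.comp_def] using hL.comp hδlim
  have hψ₁_div : Tendsto (fun x => ψ₁ x / x) (𝓝[>] 0) (𝓝 0) := by
    refine (mul_zero L ▸ hL.mul hcusp).congr' ?_
    filter_upwards [Ioc_mem_nhdsGT hδ₀] with x hx
    exact div_mul_div_cancel₀ (hgap x hx).1.ne'
  have hψ₁'0 := derivWithin_Icc_left_eq_zero hδ₀
    (hψ₁C1.differentiableOn one_ne_zero 0 (left_mem_Icc.2 hδ₀.le)) hψ₁0 hψ₁_div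
  obtain ⟨A, hA⟩ := hK.exists_bound_of_continuousOn (f := fun u => u - 1) (by fun_prop)
  have hx : ∀ n, ∀ u ∈ K, |q n * u + δ (n + 1) - δ n| ≤ A * q n := fun n u hu => by
    rw [hδrec, show q n * u + (δ n - q n) - δ n = q n * (u - 1) by ring, abs_mul,
      abs_of_pos (hqpos n), mul_comm]
    exact mul_le_mul_of_nonneg_right (hA u hu) (hqpos n).le
  exact ⟨eventually_atTop.1 (eventually_mem_Ioo_of_abs_sub_le hδlim hqδ hx hδ₀),
    tendsto_iSup_abs_sub_of_tendstoUniformlyOn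
      (tendstoUniformlyOn_div_of_abs_sub_le hδ₀ hψ₁C1 hψ₁'0 hδlim hqpos hqδ hLδ hx)⟩
end

section
/- The domains rescaled around the point (δ_{n+1}, 0) at scale q_n converge to the horizontal strip ℝ × [L, L+1] in the following sense: for every u ∈ ℝ and every v ∈ ℝ with L < v < L+1, there is N such that for all n ≥ N the point (q_n u + δ_{n+1}, q_n v) lies in D̄ and in fact ψ₁(q_n u + δ_{n+1}) < q_n v < ψ₂(q_n u + δ_{n+1}); and for every u ∈ ℝ and every v with v < L or v > L+1, there is N such that for all n ≥ N the point (q_n u + δ_{n+1}, q_n v) does not lie in D̄. -/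
/-!
Since `|ψᵢ'| < 1/2` on the compact interval, `0 < ψ₂ x - ψ₁ x < x`, so `δ_n` decreases in
`(0, δ₀]`; its limit is a zero of `ψ₂ - ψ₁`, hence `δ_n → 0`. The cusp condition together with
`ψ₁ / (ψ₂ - ψ₁) → L` gives `ψ₁(x)/x, ψ₂(x)/x → 0`, i.e. `ψ₁'(0) = ψ₂'(0) = 0`, and by continuity
of the derivatives the `ψᵢ` are `ε`-Lipschitz near `0`. The point `q_n u + δ_{n+1}` equals
`δ_n + q_n (u - 1)`, at distance `O(q_n) = o(δ_n)` from `δ_n`; hence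
`ψᵢ(q_n u + δ_{n+1}) = ψᵢ(δ_n) + o(q_n)`, and after division by `q_n` the lower and upper
profiles tend to `L` and `L + 1`.
-/

open Set Filter Topology Asymptotics

theorem ContDiffOn.exists_lt_abs_sub_le {f : ℝ → ℝ} {a b c : ℝ} (hab : a < b)
    (hf : ContDiffOn ℝ 1 f (Icc a b)) (hc : ∀ x ∈ Icc a b, |derivWithin f (Icc a b) x| < c) :
    ∃ C < c, ∀ x ∈ Icc a b, |f x - f a| ≤ C * (x - a) := by
  obtain ⟨x₀, hx₀, hmax⟩ := isCompact_Icc.exists_isMaxOn (nonempty_Icc.2 hab.le)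
    (hf.continuousOn_derivWithin (uniqueDiffOn_Icc hab) le_rfl).abs
  refine ⟨_, hc x₀ hx₀, fun x hx => ?_⟩
  simpa [abs_of_nonneg (sub_nonneg.2 hx.1)] using
    (convex_Icc a b).norm_image_sub_le_of_norm_derivWithin_le
      (hf.differentiableOn one_ne_zero) (fun y hy => hmax hy) (left_mem_Icc.2 hab.le) hx

theorem sub_lt_self_of_abs_derivWithin_lt_half_s5 {ψ₁ ψ₂ : ℝ → ℝ} {a : ℝ} (ha : 0 < a)
    (h₁ : ContDiffOn ℝ 1 ψ₁ (Icc 0 a)) (h₂ : ContDiffOn ℝ 1 ψ₂ (Icc 0 a))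
    (h₁0 : ψ₁ 0 = 0) (h₂0 : ψ₂ 0 = 0)
    (h₁' : ∀ x ∈ Icc 0 a, |derivWithin ψ₁ (Icc 0 a) x| < 1 / 2)
    (h₂' : ∀ x ∈ Icc 0 a, |derivWithin ψ₂ (Icc 0 a) x| < 1 / 2) :
    ∀ x ∈ Ioc 0 a, ψ₂ x - ψ₁ x < x := by
  intro x hx
  obtain ⟨C₁, hC₁, hb₁⟩ := h₁.exists_lt_abs_sub_le ha h₁'
  obtain ⟨C₂, hC₂, hb₂⟩ := h₂.exists_lt_abs_sub_le ha h₂'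
  have e₁ := hb₁ x (Ioc_subset_Icc_self hx)
  have e₂ := hb₂ x (Ioc_subset_Icc_self hx)
  rw [h₁0, sub_zero, sub_zero] at e₁
  rw [h₂0, sub_zero, sub_zero] at e₂
  nlinarith [abs_le.1 e₁, abs_le.1 e₂, hx.1]

theorem mem_Ioc_of_sub_iterate {g : ℝ → ℝ} {a : ℝ} {δ q : ℕ → ℝ}
    (hg : ∀ x ∈ Ioc 0 a, 0 < g x ∧ g x < x) (hδ0 : δ 0 ∈ Ioc 0 a) (hq : ∀ n, q n = g (δ n))
    (hrec : ∀ n, δ (n + 1) = δ n - q n) (n : ℕ) : δ n ∈ Ioc 0 a := by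
  induction n with
  | zero => exact hδ0
  | succ n ih =>
    have := hg _ ih
    rw [hrec n, hq n]
    constructor <;> linarith [ih.2]

theorem tendsto_nhdsGT_of_sub_iterate {g : ℝ → ℝ} {a : ℝ} {δ q : ℕ → ℝ}
    (hcont : ContinuousOn g (Icc 0 a)) (hg : ∀ x ∈ Ioc 0 a, 0 < g x ∧ g x < x)
    (hδ0 : δ 0 ∈ Ioc 0 a) (hq : ∀ n, q n = g (δ n)) (hrec : ∀ n, δ (n + 1) = δ n - q n) :
    Tendsto δ atTop (𝓝[>] 0) := by
  have hmem := mem_Ioc_of_sub_iterate hg hδ0 hq hrec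
  have hanti : Antitone δ :=
    antitone_nat_of_succ_le fun n => by rw [hrec n, hq n]; linarith [(hg _ (hmem n)).1]
  have hbdd : BddBelow (range δ) := ⟨0, by rintro _ ⟨n, rfl⟩; exact (hmem n).1.le⟩
  set l := ⨅ n, δ n
  have hlim : Tendsto δ atTop (𝓝 l) := tendsto_atTop_ciInf hanti hbdd
  have hl : l ∈ Icc 0 a := ⟨le_ciInf fun n => (hmem n).1.le, (ciInf_le hbdd 0).trans (hmem 0).2⟩
  have hgl : g l = 0 := by
    have h₁ : Tendsto (fun n => g (δ n)) atTop (𝓝 (g l)) := (hcont l hl).tendsto.comp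
      (tendsto_nhdsWithin_iff.2 ⟨hlim, .of_forall fun n => Ioc_subset_Icc_self (hmem n)⟩)
    have h₂ : Tendsto (fun n => g (δ n)) atTop (𝓝 (l - l)) :=
      (hlim.sub (hlim.comp (tendsto_add_atTop_nat 1))).congr fun n => by simp [hrec n, hq n]
    exact tendsto_nhds_unique h₁ (by simpa using h₂)
  have hl0 : l = 0 := by
    by_contra hne
    linarith [(hg l ⟨lt_of_le_of_ne hl.1 (Ne.symm hne), hl.2⟩).1]
  exact tendsto_nhdsWithin_iff.2 ⟨hl0 ▸ hlim, .of_forall fun n => (hmem n).1⟩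

theorem derivWithin_Icc_left_eq_of_tendsto_slope {f : ℝ → ℝ} {a b l : ℝ} (hab : a < b)
    (hf : DifferentiableWithinAt ℝ f (Icc a b) a)
    (h : Tendsto (fun x => (f x - f a) / (x - a)) (𝓝[>] a) (𝓝 l)) :
    derivWithin f (Icc a b) a = l := by
  have hd := hf.hasDerivWithinAt.mono Ioo_subset_Icc_self
  rw [HasDerivWithinAt.Ioi_iff_Ioo hab, hasDerivWithinAt_iff_tendsto_slope' self_notMem_Ioi] at hd
  exact tendsto_nhds_unique hd (by simpa [slope_fun_def_field] using h)

theorem tendsto_div_self_of_cusp {ψ₁ ψ₂ : ℝ → ℝ} {L : ℝ} {l : Filter ℝ}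
    (hne : ∀ᶠ x in l, ψ₁ x ≠ ψ₂ x) (hcusp : Tendsto (fun x => (ψ₂ x - ψ₁ x) / x) l (𝓝 0))
    (hL : Tendsto (fun x => ψ₁ x / (ψ₂ x - ψ₁ x)) l (𝓝 L)) :
    Tendsto (fun x => ψ₁ x / x) l (𝓝 0) ∧ Tendsto (fun x => ψ₂ x / x) l (𝓝 0) := by
  have h₁ : Tendsto (fun x => ψ₁ x / x) l (𝓝 0) := by
    simpa using (hL.mul hcusp).congr' (hne.mono fun x hx =>
      div_mul_div_cancel₀ (sub_ne_zero.2 hx.symm))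
  exact ⟨h₁, by simpa using (h₁.add hcusp).congr fun x => by ring⟩

theorem derivWithin_eq_zero_of_cusp {ψ₁ ψ₂ : ℝ → ℝ} {a L : ℝ} (ha : 0 < a)
    (h₁ : DifferentiableWithinAt ℝ ψ₁ (Icc 0 a) 0) (h₂ : DifferentiableWithinAt ℝ ψ₂ (Icc 0 a) 0)
    (h₁0 : ψ₁ 0 = 0) (h₂0 : ψ₂ 0 = 0) (hne : ∀ᶠ x in 𝓝[>] 0, ψ₁ x ≠ ψ₂ x)
    (hcusp : Tendsto (fun x => (ψ₂ x - ψ₁ x) / x) (𝓝[>] 0) (𝓝 0))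
    (hL : Tendsto (fun x => ψ₁ x / (ψ₂ x - ψ₁ x)) (𝓝[>] 0) (𝓝 L)) :
    derivWithin ψ₁ (Icc 0 a) 0 = 0 ∧ derivWithin ψ₂ (Icc 0 a) 0 = 0 := by
  obtain ⟨hψ₁, hψ₂⟩ := tendsto_div_self_of_cusp hne hcusp hL
  exact ⟨derivWithin_Icc_left_eq_of_tendsto_slope ha h₁ (by simpa [h₁0] using hψ₁),
    derivWithin_Icc_left_eq_of_tendsto_slope ha h₂ (by simpa [h₂0] using hψ₂)⟩

theorem tendsto_div_sub_add_one {ψ₁ ψ₂ : ℝ → ℝ} {L : ℝ} {l : Filter ℝ}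
    (hne : ∀ᶠ x in l, ψ₁ x ≠ ψ₂ x) (hL : Tendsto (fun x => ψ₁ x / (ψ₂ x - ψ₁ x)) l (𝓝 L)) :
    Tendsto (fun x => ψ₂ x / (ψ₂ x - ψ₁ x)) l (𝓝 (L + 1)) :=
  (hL.add_const 1).congr' (hne.mono fun x hx => by
    field_simp [sub_ne_zero.2 hx.symm]
    ring)

theorem isLittleO_sub_of_derivWithin_eq_zero {E ι : Type*} [NormedAddCommGroup E]
    [NormedSpace ℝ E] {f : ℝ → E} {s : Set ℝ} {x₀ : ℝ} {l : Filter ι} {a b : ι → ℝ}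
    (hs : Convex ℝ s) (hf : DifferentiableOn ℝ f s)
    (hf' : ContinuousWithinAt (derivWithin f s) s x₀) (h0 : derivWithin f s x₀ = 0)
    (ha : Tendsto a l (𝓝[s] x₀)) (hb : Tendsto b l (𝓝[s] x₀)) :
    (fun i => f (b i) - f (a i)) =o[l] fun i => b i - a i := by
  refine isLittleO_iff.2 fun c hc => ?_
  rw [ContinuousWithinAt, h0] at hf'
  obtain ⟨ε, hε, hball⟩ := Metric.mem_nhdsWithin_iff.1 (hf' (Metric.closedBall_mem_nhds 0 hc))
  have ht : s ∩ Metric.ball x₀ ε ∈ 𝓝[s] x₀ :=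
    inter_mem_nhdsWithin s (Metric.ball_mem_nhds x₀ hε)
  filter_upwards [ha ht, hb ht] with i hai hbi
  exact (hs.inter (convex_ball x₀ ε)).norm_image_sub_le_of_norm_hasDerivWithin_le
    (fun y hy => (hf y hy.1).hasDerivWithinAt.mono inter_subset_left)
    (fun y hy => mem_closedBall_zero_iff.1 (hball ⟨hy.2, hy.1⟩)) hai hbi

theorem tendsto_add_mul_nhdsGT {ι : Type*} {l : Filter ι} {δ q : ι → ℝ}
    (hδ : Tendsto δ l (𝓝[>] 0)) (hq : Tendsto (fun i => q i / δ i) l (𝓝 0)) (c : ℝ) :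
    Tendsto (fun i => δ i + q i * c) l (𝓝[>] 0) := by
  have hδpos : ∀ᶠ i in l, 0 < δ i := hδ self_mem_nhdsWithin
  have hfac : Tendsto (fun i => 1 + q i / δ i * c) l (𝓝 1) := by
    simpa using (hq.mul_const c).const_add 1
  have heq : ∀ᶠ i in l, δ i * (1 + q i / δ i * c) = δ i + q i * c :=
    hδpos.mono fun i hi => by field_simp
  refine tendsto_nhdsWithin_iff.2 ⟨?_, ?_⟩
  · simpa using ((tendsto_nhdsWithin_iff.1 hδ).1.mul hfac).congr' heq
  · filter_upwards [heq, hδpos, hfac.eventually_const_lt one_pos] with i h h₁ h₂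
    rw [mem_Ioi, ← h]
    exact mul_pos h₁ h₂

theorem tendsto_comp_add_mul_div {ι : Type*} {l : Filter ι} {f g : ℝ → ℝ} {a μ c : ℝ}
    {δ : ι → ℝ} (ha : 0 < a) (hf : ContDiffOn ℝ 1 f (Icc 0 a)) (hf0 : derivWithin f (Icc 0 a) 0 = 0)
    (hg : Tendsto (fun x => g x / x) (𝓝[>] 0) (𝓝 0))
    (hfg : Tendsto (fun x => f x / g x) (𝓝[>] 0) (𝓝 μ)) (hδ : Tendsto δ l (𝓝[>] 0)) :
    Tendsto (fun i => f (δ i + g (δ i) * c) / g (δ i)) l (𝓝 μ) := by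
  have hGT : 𝓝[>] (0 : ℝ) ≤ 𝓝[Icc 0 a] 0 := by
    rw [nhdsWithin_Icc_eq_nhdsGE ha]
    exact nhdsWithin_mono _ Ioi_subset_Ici_self
  have hshift := tendsto_add_mul_nhdsGT hδ (hg.comp hδ) c
  have ho := isLittleO_sub_of_derivWithin_eq_zero (convex_Icc 0 a)
    (hf.differentiableOn one_ne_zero)
    (hf.continuousOn_derivWithin (uniqueDiffOn_Icc ha) le_rfl 0 ⟨le_rfl, ha.le⟩) hf0
    (hδ.mono_right hGT) (hshift.mono_right hGT)
  have ho' : (fun i => f (δ i + g (δ i) * c) - f (δ i)) =o[l] fun i => g (δ i) := by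
    refine ho.trans_isBigO ?_
    simpa only [add_sub_cancel_left, mul_comm c] using
      isBigO_const_mul_self c (fun i => g (δ i)) l
  simpa only [add_zero] using ((hfg.comp hδ).add ho'.tendsto_div_nhds_zero).congr fun i => by
    simp only [Function.comp_apply]
    ring

theorem tendsto_rescaled_div {f g : ℝ → ℝ} {a μ : ℝ} {δ q : ℕ → ℝ} (ha : 0 < a)
    (hf : ContDiffOn ℝ 1 f (Icc 0 a)) (hf0 : derivWithin f (Icc 0 a) 0 = 0)
    (hg : Tendsto (fun x => g x / x) (𝓝[>] 0) (𝓝 0))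
    (hfg : Tendsto (fun x => f x / g x) (𝓝[>] 0) (𝓝 μ)) (hδ : Tendsto δ atTop (𝓝[>] 0))
    (hq : ∀ n, q n = g (δ n)) (hrec : ∀ n, δ (n + 1) = δ n - q n) (u : ℝ) :
    Tendsto (fun n => f (q n * u + δ (n + 1)) / q n) atTop (𝓝 μ) := by
  have hx : ∀ n, q n * u + δ (n + 1) = δ n + g (δ n) * (u - 1) := fun n => by
    rw [hrec, hq]; ring
  refine (tendsto_comp_add_mul_div (c := u - 1) ha hf hf0 hg hfg hδ).congr fun n => ?_
  rw [hx, hq]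

theorem eventually_rescaled_mem_Ioc {g : ℝ → ℝ} {a : ℝ} {δ q : ℕ → ℝ} (ha : 0 < a)
    (hg : Tendsto (fun x => g x / x) (𝓝[>] 0) (𝓝 0)) (hδ : Tendsto δ atTop (𝓝[>] 0))
    (hq : ∀ n, q n = g (δ n)) (hrec : ∀ n, δ (n + 1) = δ n - q n) (u : ℝ) :
    ∀ᶠ n in atTop, q n * u + δ (n + 1) ∈ Ioc 0 a := by
  have hx : ∀ n, q n * u + δ (n + 1) = δ n + g (δ n) * (u - 1) := fun n => by
    rw [hrec, hq]; ring
  filter_upwards [tendsto_add_mul_nhdsGT hδ (hg.comp hδ) (u - 1) (Ioc_mem_nhdsGT ha)] with n hn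
  rwa [hx]

theorem eventually_lt_mul_of_tendsto_div {ι : Type*} {l : Filter ι} {a q : ι → ℝ} {μ v : ℝ}
    (hq : ∀ i, 0 < q i) (h : Tendsto (fun i => a i / q i) l (𝓝 μ)) (hv : μ < v) :
    ∀ᶠ i in l, a i < q i * v :=
  (h.eventually_lt_const hv).mono fun i hi => by rwa [div_lt_iff₀ (hq i), mul_comm] at hi

theorem eventually_mul_lt_of_tendsto_div {ι : Type*} {l : Filter ι} {a q : ι → ℝ} {μ v : ℝ}
    (hq : ∀ i, 0 < q i) (h : Tendsto (fun i => a i / q i) l (𝓝 μ)) (hv : v < μ) :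
    ∀ᶠ i in l, q i * v < a i :=
  (h.eventually_const_lt hv).mono fun i hi => by rwa [lt_div_iff₀ (hq i), mul_comm] at hi

/-- The domains rescaled around `(δ_{n+1}, 0)` at scale `q_n` converge to the
horizontal strip `ℝ × [L, L+1]`: points `(u, v)` with `L < v < L + 1`
eventually correspond to interior points of `D̄`, and points with `v < L` or
`v > L + 1` eventually correspond to points outside `D̄`. -/
theorem rescaled_domains_converge_to_strip
    (δ₀ : ℝ) (hδ₀ : 0 < δ₀)
    (ψ₁ ψ₂ : ℝ → ℝ)
    (hψ₁C1 : ContDiffOn ℝ 1 ψ₁ (Icc 0 δ₀))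
    (hψ₂C1 : ContDiffOn ℝ 1 ψ₂ (Icc 0 δ₀))
    (hψ₁0 : ψ₁ 0 = 0) (hψ₂0 : ψ₂ 0 = 0)
    (hlt : ∀ x ∈ Ioc 0 δ₀, ψ₁ x < ψ₂ x)
    (hψ₁' : ∀ x ∈ Icc 0 δ₀, |derivWithin ψ₁ (Icc 0 δ₀) x| < 1 / 2)
    (hψ₂' : ∀ x ∈ Icc 0 δ₀, |derivWithin ψ₂ (Icc 0 δ₀) x| < 1 / 2)
    (hcusp : Tendsto (fun x => (ψ₂ x - ψ₁ x) / x) (𝓝[>] (0 : ℝ)) (𝓝 0))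
    (L : ℝ)
    (hL : Tendsto (fun x => ψ₁ x / (ψ₂ x - ψ₁ x)) (𝓝[>] (0 : ℝ)) (𝓝 L))
    (δ : ℕ → ℝ) (q : ℕ → ℝ)
    (hδ0 : δ 0 = δ₀)
    (hq : ∀ n, q n = ψ₂ (δ n) - ψ₁ (δ n))
    (hδrec : ∀ n, δ (n + 1) = δ n - q n)
    (Dbar : Set (ℝ × ℝ))
    (hDbar : Dbar = {p : ℝ × ℝ |
      0 ≤ p.1 ∧ p.1 ≤ δ₀ ∧ ψ₁ p.1 ≤ p.2 ∧ p.2 ≤ ψ₂ p.1}) :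
    (∀ u v : ℝ, L < v → v < L + 1 →
      ∃ N : ℕ, ∀ n ≥ N,
        (q n * u + δ (n + 1), q n * v) ∈ Dbar ∧
          ψ₁ (q n * u + δ (n + 1)) < q n * v ∧
          q n * v < ψ₂ (q n * u + δ (n + 1))) ∧
    (∀ u v : ℝ, v < L ∨ L + 1 < v →
      ∃ N : ℕ, ∀ n ≥ N, (q n * u + δ (n + 1), q n * v) ∉ Dbar) := by
  subst hDbar
  have hgap : ∀ x ∈ Ioc 0 δ₀, 0 < ψ₂ x - ψ₁ x ∧ ψ₂ x - ψ₁ x < x := fun x hx =>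
    ⟨sub_pos.2 (hlt x hx),
      sub_lt_self_of_abs_derivWithin_lt_half_s5 hδ₀ hψ₁C1 hψ₂C1 hψ₁0 hψ₂0 hψ₁' hψ₂' x hx⟩
  have hδ0_mem : δ 0 ∈ Ioc 0 δ₀ := by rw [hδ0]; exact ⟨hδ₀, le_rfl⟩
  have hq_pos : ∀ n, 0 < q n := fun n =>
    hq n ▸ (hgap _ (mem_Ioc_of_sub_iterate hgap hδ0_mem hq hδrec n)).1
  have hδ := tendsto_nhdsGT_of_sub_iterate (hψ₂C1.continuousOn.sub hψ₁C1.continuousOn)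
    hgap hδ0_mem hq hδrec
  have hne : ∀ᶠ x in 𝓝[>] (0 : ℝ), ψ₁ x ≠ ψ₂ x :=
    mem_of_superset (Ioc_mem_nhdsGT hδ₀) fun x hx => (hlt x hx).ne
  obtain ⟨hd₁, hd₂⟩ := derivWithin_eq_zero_of_cusp hδ₀
    (hψ₁C1.differentiableOn one_ne_zero 0 ⟨le_rfl, hδ₀.le⟩)
    (hψ₂C1.differentiableOn one_ne_zero 0 ⟨le_rfl, hδ₀.le⟩) hψ₁0 hψ₂0 hne hcusp hL
  have hlow := tendsto_rescaled_div hδ₀ hψ₁C1 hd₁ hcusp hL hδ hq hδrec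
  have hupp := tendsto_rescaled_div hδ₀ hψ₂C1 hd₂ hcusp
    (tendsto_div_sub_add_one hne hL) hδ hq hδrec
  have hin := eventually_rescaled_mem_Ioc hδ₀ hcusp hδ hq hδrec
  refine ⟨fun u v hLv hvL => ?_, fun u v hv => ?_⟩
  · obtain ⟨N, hN⟩ := eventually_atTop.1 ((hin u).and
      ((eventually_lt_mul_of_tendsto_div hq_pos (hlow u) hLv).and
        (eventually_mul_lt_of_tendsto_div hq_pos (hupp u) hvL)))
    exact ⟨N, fun n hn => have ⟨hmem, h₁, h₂⟩ := hN n hn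
      ⟨⟨hmem.1.le, hmem.2, h₁.le, h₂.le⟩, h₁, h₂⟩⟩
  · refine eventually_atTop.1 (hv.elim (fun hv => ?_) fun hv => ?_)
    · exact (eventually_mul_lt_of_tendsto_div hq_pos (hlow u) hv).mono
        fun n h hmem => h.not_ge hmem.2.2.1
    · exact (eventually_lt_mul_of_tendsto_div hq_pos (hupp u) hv).mono
        fun n h hmem => h.not_ge hmem.2.2.2
end

section
/- Let d ≥ 1, let S ⊆ ℝ^d, let e* ∈ ℝ^d with |e*| = 1, let r* > 0, and let γ : S → ℝ^d. Assume there are constants c₁ > 0 and c₂ > 0 such that ⟨e*, γ(x)⟩ ≥ c₁ for every x ∈ S with ⟨e*, x⟩ ≤ 2r*, and there is a C² function φ₃ : ℝ^d → ℝ such that ⟨∇φ₃(x), γ(x)⟩ ≥ c₂ and φ₃(x) ≥ 2r* for every x ∈ S with ⟨e*, x⟩ ≥ r*. Let χ : ℝ → [0,1] be a C² nonincreasing function with χ(r) = 1 for r ≤ 0 and χ(r) = 0 for r ≥ 1. Then the function φ(x) := ⟨e*, x⟩ χ((⟨e*, x⟩ − r*)/r*) + (1 − χ((⟨e*, x⟩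 − r*)/r*)) φ₃(x) is C² on ℝ^d and satisfies ⟨∇φ(x), γ(x)⟩ ≥ min(c₁, c₂) > 0 for every x ∈ S. -/
/-!
Below `r*` the function `φ` is `⟨e*, ·⟩` and above `2r*` it is `φ₃`, so there the bound is one of
the two hypotheses. On the transition layer `r* ≤ ⟨e*, x⟩ ≤ 2r*` the derivative of `φ` along `γ(x)`
is the convex combination `χ ⟨e*, γ⟩ + (1 - χ) ⟨∇φ₃, γ⟩ ≥ min(c₁, c₂)` plus the term
`(⟨e*, x⟩ - φ₃(x)) χ'/r* ⟨e*, γ⟩`, a product of two nonpositive factors and a positive one, because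
`φ₃ ≥ 2r* ≥ ⟨e*, x⟩` there and `χ` is nonincreasing.
-/

open Set RealInnerProductSpace

section Cutoff

variable {χ : ℝ → ℝ}

lemma cutoff_mem_Icc (hanti : Antitone χ) (h1 : ∀ r ≤ (0 : ℝ), χ r = 1)
    (h0 : ∀ r ≥ (1 : ℝ), χ r = 0) (t : ℝ) : χ t ∈ Icc (0 : ℝ) 1 := by
  constructor
  · rw [← h0 (max t 1) (le_max_right _ _)]
    exact hanti (le_max_left _ _)
  · rw [← h1 (min t 0) (min_le_right _ _)]
    exact hanti (min_le_left _ _)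

lemma deriv_eq_zero_of_forall_le_eq {a b t : ℝ} (h : ∀ r ≤ a, χ r = b) (ht : t < a) :
    deriv χ t = 0 := by
  rw [(Filter.eventuallyEq_of_mem (Iio_mem_nhds ht) fun r hr => h r (le_of_lt hr)).deriv_eq,
    deriv_const]

lemma deriv_eq_zero_of_forall_ge_eq {a b t : ℝ} (h : ∀ r ≥ a, χ r = b) (ht : a < t) :
    deriv χ t = 0 := by
  rw [(Filter.eventuallyEq_of_mem (Ioi_mem_nhds ht) fun r hr => h r (le_of_lt hr)).deriv_eq,
    deriv_const]

/-- The right-hand side is `⟨∇φ(x), γ(x)⟩` for `u = ⟨e*, x⟩`, `p = φ₃(x)`, `a = ⟨e*, γ(x)⟩` and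
`b = ⟨∇φ₃(x), γ(x)⟩`. -/
lemma min_le_cutoff_combination (hanti : Antitone χ) (h1 : ∀ r ≤ (0 : ℝ), χ r = 1)
    (h0 : ∀ r ≥ (1 : ℝ), χ r = 0) {r u p a b c₁ c₂ : ℝ} (hr : 0 < r) (hc₁ : 0 < c₁)
    (ha : u ≤ 2 * r → c₁ ≤ a) (hb : r ≤ u → c₂ ≤ b ∧ 2 * r ≤ p) :
    min c₁ c₂ ≤ χ ((u - r) / r) * a + (1 - χ ((u - r) / r)) * b
      + (u - p) * (deriv χ ((u - r) / r) / r * a) := by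
  set t := (u - r) / r
  by_cases hlow : u < r
  · have ht : t < 0 := div_neg_of_neg_of_pos (by linarith) hr
    rw [h1 t ht.le, deriv_eq_zero_of_forall_le_eq h1 ht]
    simp only [one_mul, sub_self, zero_mul, zero_div, mul_zero, add_zero]
    exact (min_le_left _ _).trans (ha (by linarith))
  by_cases hhigh : 2 * r < u
  · have ht : 1 < t := (one_lt_div hr).2 (by linarith)
    rw [h0 t ht.le, deriv_eq_zero_of_forall_ge_eq h0 ht]
    simp only [zero_mul, sub_zero, one_mul, zero_div, mul_zero, add_zero, zero_add]
    exact (min_le_right _ _).trans (hb (by linarith)).1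
  obtain ⟨hχt_nonneg, hχt_le_one⟩ := cutoff_mem_Icc hanti h1 h0 t
  have ha' := ha (by linarith)
  obtain ⟨hb', hp⟩ := hb (by linarith)
  have hconvex : min c₁ c₂ ≤ χ t * a + (1 - χ t) * b := by
    nlinarith [min_le_left c₁ c₂, min_le_right c₁ c₂]
  have hslope : deriv χ t / r * a ≤ 0 :=
    mul_nonpos_of_nonpos_of_nonneg (div_nonpos_of_nonpos_of_nonneg hanti.deriv_nonpos hr.le)
      (by linarith)
  have hcross : 0 ≤ (u - p) * (deriv χ t / r * a) :=
    mul_nonneg_of_nonpos_of_nonpos (by linarith) hslope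
  linarith

end Cutoff

theorem HasFDerivAt.patch {F : Type*} [NormedAddCommGroup F] [NormedSpace ℝ F]
    {c f g : F → ℝ} {c' f' g' : F →L[ℝ] ℝ} {x : F}
    (hc : HasFDerivAt c c' x) (hf : HasFDerivAt f f' x) (hg : HasFDerivAt g g' x) :
    HasFDerivAt (fun y => f y * c y + (1 - c y) * g y)
      (c x • f' + (1 - c x) • g' + (f x - g x) • c') x := by
  refine ((hf.mul hc).add (((hasFDerivAt_const (1 : ℝ) x).sub hc).mul hg)).congr_fderiv ?_
  ext v
  simp only [Pi.sub_apply, zero_sub, smul_neg, add_apply, smul_apply, smul_eq_mul, neg_apply]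
  ring

section Inner

variable {E : Type*} [NormedAddCommGroup E] [InnerProductSpace ℝ E]

lemma HasFDerivAt.inner_gradient [CompleteSpace E] {f : E → ℝ} {f' : E →L[ℝ] ℝ} {x : E}
    (h : HasFDerivAt f f' x) (v : E) : ⟪gradient f x, v⟫ = f' v := by
  rw [gradient, h.fderiv, InnerProductSpace.toDual_symm_apply]

lemma hasFDerivAt_inner_right (e x : E) : HasFDerivAt (fun y => ⟪e, y⟫) (innerSL ℝ e) x :=
  (innerSL ℝ e).hasFDerivAt

lemma hasFDerivAt_comp_inner_rescaled {χ : ℝ → ℝ} (e : E) (r : ℝ) {x : E}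
    (hχ : DifferentiableAt ℝ χ ((⟪e, x⟫ - r) / r)) :
    HasFDerivAt (fun y => χ ((⟪e, y⟫ - r) / r))
      ((deriv χ ((⟪e, x⟫ - r) / r) / r) • innerSL ℝ e) x := by
  have hrescale : HasDerivAt (fun s => (s - r) / r) (1 / r) ⟪e, x⟫ :=
    ((hasDerivAt_id _).sub_const r).div_const r
  have hcomp : HasDerivAt (fun s => χ ((s - r) / r)) (deriv χ ((⟪e, x⟫ - r) / r) * (1 / r))
      ⟪e, x⟫ := hχ.hasDerivAt.comp (h := fun s => (s - r) / r) _ hrescale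
  rw [div_eq_mul_one_div]
  exact hcomp.comp_hasFDerivAt x (hasFDerivAt_inner_right e x)

end Inner

theorem patched_lyapunov_function_general
    (d : ℕ)
    (S : Set (EuclideanSpace ℝ (Fin d)))
    (estar : EuclideanSpace ℝ (Fin d))
    (rstar : ℝ) (hrstar : 0 < rstar)
    (γ : EuclideanSpace ℝ (Fin d) → EuclideanSpace ℝ (Fin d))
    (c₁ c₂ : ℝ) (hc₁ : 0 < c₁) (hc₂ : 0 < c₂)
    (hγ₁ : ∀ x ∈ S, ⟪estar, x⟫ ≤ 2 * rstar → c₁ ≤ ⟪estar, γ x⟫)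
    (φ₃ : EuclideanSpace ℝ (Fin d) → ℝ) (hφ₃ : ContDiff ℝ 2 φ₃)
    (hγ₂ : ∀ x ∈ S, rstar ≤ ⟪estar, x⟫ →
      c₂ ≤ ⟪gradient φ₃ x, γ x⟫ ∧ 2 * rstar ≤ φ₃ x)
    (χ : ℝ → ℝ) (hχ : ContDiff ℝ 2 χ)
    (hχanti : Antitone χ)
    (hχ1 : ∀ r ≤ (0 : ℝ), χ r = 1) (hχ0 : ∀ r ≥ (1 : ℝ), χ r = 0) :
    ContDiff ℝ 2 (fun x : EuclideanSpace ℝ (Fin d) =>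
        ⟪estar, x⟫ * χ ((⟪estar, x⟫ - rstar) / rstar)
          + (1 - χ ((⟪estar, x⟫ - rstar) / rstar)) * φ₃ x) ∧
      (∀ x ∈ S,
        min c₁ c₂ ≤ ⟪gradient (fun x : EuclideanSpace ℝ (Fin d) =>
          ⟪estar, x⟫ * χ ((⟪estar, x⟫ - rstar) / rstar)
            + (1 - χ ((⟪estar, x⟫ - rstar) / rstar)) * φ₃ x) x, γ x⟫) ∧
      0 < min c₁ c₂ := by
  have hinner : ContDiff ℝ 2 fun x : EuclideanSpace ℝ (Fin d) => ⟪estar, x⟫ :=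
    (innerSL ℝ estar).contDiff
  refine ⟨by fun_prop, fun x hx => ?_, lt_min hc₁ hc₂⟩
  have hcut := hasFDerivAt_comp_inner_rescaled estar rstar (x := x)
    (hχ.differentiable two_ne_zero _)
  have hφ₃' := (hφ₃.differentiable two_ne_zero x).hasFDerivAt
  rw [(hcut.patch (hasFDerivAt_inner_right estar x) hφ₃').inner_gradient]
  simp only [add_apply, smul_apply, innerSL_apply_apply, smul_eq_mul, ← hφ₃'.inner_gradient]
  exact min_le_cutoff_combination hχanti hχ1 hχ0 hrstar hc₁ (hγ₁ x hx) (hγ₂ x hx)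

/-- Construction of a `C²` function whose derivative in the directions `γ` is
uniformly positive on `S`: patching the linear function `⟨e*, ·⟩` with a `C²`
function `φ₃` by means of a cutoff `χ` yields a `C²` function `φ` with
`⟨∇φ(x), γ(x)⟩ ≥ min(c₁, c₂) > 0` on `S`. -/
theorem patched_lyapunov_function
    (d : ℕ) (hd : 1 ≤ d)
    (S : Set (EuclideanSpace ℝ (Fin d)))
    (estar : EuclideanSpace ℝ (Fin d)) (hestar : ‖estar‖ = 1)
    (rstar : ℝ) (hrstar : 0 < rstar)
    (γ : EuclideanSpace ℝ (Fin d) → EuclideanSpace ℝ (Fin d))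
    (c₁ c₂ : ℝ) (hc₁ : 0 < c₁) (hc₂ : 0 < c₂)
    (hγ₁ : ∀ x ∈ S, ⟪estar, x⟫ ≤ 2 * rstar → c₁ ≤ ⟪estar, γ x⟫)
    (φ₃ : EuclideanSpace ℝ (Fin d) → ℝ) (hφ₃ : ContDiff ℝ 2 φ₃)
    (hγ₂ : ∀ x ∈ S, rstar ≤ ⟪estar, x⟫ →
      c₂ ≤ ⟪gradient φ₃ x, γ x⟫ ∧ 2 * rstar ≤ φ₃ x)
    (χ : ℝ → ℝ) (hχ : ContDiff ℝ 2 χ)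
    (hχ01 : ∀ r, χ r ∈ Icc (0 : ℝ) 1)
    (hχanti : Antitone χ)
    (hχ1 : ∀ r ≤ (0 : ℝ), χ r = 1) (hχ0 : ∀ r ≥ (1 : ℝ), χ r = 0) :
    ContDiff ℝ 2 (fun x : EuclideanSpace ℝ (Fin d) =>
        ⟪estar, x⟫ * χ ((⟪estar, x⟫ - rstar) / rstar)
          + (1 - χ ((⟪estar, x⟫ - rstar) / rstar)) * φ₃ x) ∧
      (∀ x ∈ S,
        min c₁ c₂ ≤ ⟪gradient (fun x : EuclideanSpace ℝ (Fin d) =>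
          ⟪estar, x⟫ * χ ((⟪estar, x⟫ - rstar) / rstar)
            + (1 - χ ((⟪estar, x⟫ - rstar) / rstar)) * φ₃ x) x, γ x⟫) ∧
      0 < min c₁ c₂ :=
  patched_lyapunov_function_general d S estar rstar hrstar γ c₁ c₂ hc₁ hc₂ hγ₁ φ₃ hφ₃ hγ₂ χ hχ
    hχanti hχ1 hχ0
end

section
/- Let (E, ℰ) and (F, ℱ) be measurable spaces, let P be a Markov (probability) kernel from E to F, and suppose there is β ∈ [0,1] such that ‖P(x,·) − P(y,·)‖_TV ≤ β for all x, y ∈ E. Then for any two probability measures ν, ν̃ on E, ‖νP − ν̃P‖_TV ≤ β · ‖ν − ν̃‖_TV, where (νP)(A) := ∫_E P(x, A) ν(dx) for A ∈ ℱ. -/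
open MeasureTheory ProbabilityTheory

/-- The total variation distance `sup_A |μ(A) - μ'(A)|` between two measures,
the supremum being over all measurable sets. -/
noncomputable def tvDist {E : Type*} [MeasurableSpace E] (μ μ' : Measure E) : ℝ :=
  ⨆ (A : Set E) (_ : MeasurableSet A), |(μ A).toReal - (μ' A).toReal|

/-!
Write `ν + (ν' - ν) = ν' + (ν - ν')` with the excess measures `ν - ν'` and `ν' - ν`; they have
the same mass, which a Hahn decomposition set shows to be at most `‖ν - ν'‖_TV`. For measurable
`A`, the function `x ↦ P(x, A)` takes values in an interval of length `β`, so its integrals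
against the two excess measures differ by at most `β` times that mass.
-/

open Set

section TVDist

variable {E : Type*} [MeasurableSpace E]

lemma tvDist_nonneg (μ μ' : Measure E) : 0 ≤ tvDist μ μ' :=
  Real.iSup_nonneg fun _ => Real.iSup_nonneg fun _ => abs_nonneg _

lemma tvDist_comm (μ μ' : Measure E) : tvDist μ μ' = tvDist μ' μ :=
  iSup_congr fun _ => iSup_congr fun _ => abs_sub_comm _ _

lemma abs_measureReal_sub_le_tvDist (μ μ' : Measure E) [IsFiniteMeasure μ]
    [IsFiniteMeasure μ'] {A : Set E} (hA : MeasurableSet A) :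
    |μ.real A - μ'.real A| ≤ tvDist μ μ' := by
  have hbdd : BddAbove (range fun B : Set E =>
      ⨆ _ : MeasurableSet B, |μ.real B - μ'.real B|) := by
    refine ⟨μ.real univ + μ'.real univ, forall_mem_range.2 fun B => ?_⟩
    refine Real.iSup_le (fun _ => ?_) (by positivity)
    calc |μ.real B - μ'.real B| ≤ |μ.real B| + |μ'.real B| := abs_sub _ _
      _ ≤ μ.real univ + μ'.real univ := by
        simp only [abs_of_nonneg measureReal_nonneg]
        exact add_le_add (measureReal_mono (subset_univ B)) (measureReal_mono (subset_univ B))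
  exact le_ciSup_of_le hbdd A (ciSup_pos (f := fun _ => |μ.real A - μ'.real A|) hA).ge

end TVDist

namespace MeasureTheory.Measure

variable {E : Type*} [MeasurableSpace E] (μ ν : Measure E) [IsFiniteMeasure μ]
  [IsFiniteMeasure ν]

lemma add_sub_eq_add_sub : μ + (ν - μ) = ν + (μ - ν) := by
  have h := sub_toSignedMeasure_eq_toSignedMeasure_sub (μ := μ) (ν := ν)
  rw [sub_eq_sub_iff_add_eq_add] at h
  rw [← toSignedMeasure_eq_toSignedMeasure_iff, toSignedMeasure_add, toSignedMeasure_add, h,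
    add_comm]

lemma measureReal_sub_univ_le_tvDist : (μ - ν).real univ ≤ tvDist μ ν := by
  obtain ⟨s, hs⟩ := exists_isHahnDecomposition μ ν
  have hμν : (μ - ν).real s = 0 := by
    simp [measureReal_def, sub_apply_eq_zero_of_isHahnDecomposition hs]
  have hνμ : (ν - μ).real sᶜ = 0 := by
    simp [measureReal_def, sub_apply_eq_zero_of_isHahnDecomposition hs.compl]
  have hsc : μ.real sᶜ + (ν - μ).real sᶜ = ν.real sᶜ + (μ - ν).real sᶜ := by
    rw [← measureReal_add_apply, ← measureReal_add_apply, add_sub_eq_add_sub]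
  calc (μ - ν).real univ = μ.real sᶜ - ν.real sᶜ := by
        rw [← measureReal_add_measureReal_compl hs.measurableSet]
        linarith
    _ ≤ tvDist μ ν :=
      (le_abs_self _).trans (abs_measureReal_sub_le_tvDist μ ν hs.measurableSet.compl)

end MeasureTheory.Measure

lemma exists_forall_mem_Icc_of_sub_le {α : Type*} [Nonempty α] {g : α → ℝ} {β : ℝ}
    (hg : ∀ x y, g x - g y ≤ β) : ∃ m, ∀ x, g x ∈ Icc m (m + β) := by
  obtain ⟨x₀⟩ := ‹Nonempty α›
  have hbdd : BddBelow (range g) :=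
    ⟨g x₀ - β, forall_mem_range.2 fun y => by linarith [hg x₀ y]⟩
  refine ⟨⨅ x, g x, fun x => ⟨ciInf_le hbdd x, ?_⟩⟩
  have : g x - β ≤ ⨅ y, g y := le_ciInf fun y => by linarith [hg x y]
  linarith

section Integral

variable {E : Type*} [MeasurableSpace E] {g : E → ℝ} {β : ℝ}

lemma integral_sub_integral_le_of_mem_Icc {ρ σ : Measure E} [IsFiniteMeasure ρ]
    [IsFiniteMeasure σ] (hρσ : ρ.real univ = σ.real univ) (hg : Measurable g) {m : ℝ}
    (hgm : ∀ x, g x ∈ Icc m (m + β)) :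
    ∫ x, g x ∂ρ - ∫ x, g x ∂σ ≤ β * ρ.real univ := by
  have hint : ∀ μ : Measure E, [IsFiniteMeasure μ] → Integrable g μ := fun μ _ =>
    .of_mem_Icc m (m + β) hg.aemeasurable (ae_of_all _ hgm)
  have hρ : ∫ x, g x ∂ρ ≤ ∫ _, m + β ∂ρ :=
    integral_mono (hint ρ) (integrable_const _) fun x => (hgm x).2
  have hσ : ∫ _, m ∂σ ≤ ∫ x, g x ∂σ :=
    integral_mono (integrable_const _) (hint σ) fun x => (hgm x).1
  simp only [integral_const, smul_eq_mul] at hρ hσ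
  rw [← hρσ] at hσ
  linarith

lemma integral_sub_integral_le_mul_tvDist {ν ν' : Measure E} [IsProbabilityMeasure ν]
    [IsProbabilityMeasure ν'] (hg : Measurable g) (hosc : ∀ x y, g x - g y ≤ β) :
    ∫ x, g x ∂ν - ∫ x, g x ∂ν' ≤ β * tvDist ν ν' := by
  have := nonempty_of_isProbabilityMeasure ν
  have hβ : 0 ≤ β := by simpa using hosc (Classical.arbitrary E) (Classical.arbitrary E)
  obtain ⟨m, hgm⟩ := exists_forall_mem_Icc_of_sub_le hosc
  have hint : ∀ μ : Measure E, [IsFiniteMeasure μ] → Integrable g μ := fun μ _ =>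
    .of_mem_Icc m (m + β) hg.aemeasurable (ae_of_all _ hgm)
  have hsplit :
      ∫ x, g x ∂ν + ∫ x, g x ∂(ν' - ν) = ∫ x, g x ∂ν' + ∫ x, g x ∂(ν - ν') := by
    rw [← integral_add_measure (hint _) (hint _), ← integral_add_measure (hint _) (hint _),
      Measure.add_sub_eq_add_sub]
  have hmass : (ν - ν').real univ = (ν' - ν).real univ := by
    have h := congrArg (·.real univ) (Measure.add_sub_eq_add_sub ν ν')
    rw [measureReal_add_apply, measureReal_add_apply, probReal_univ (μ := ν),
      probReal_univ (μ := ν')] at h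
    linarith
  calc ∫ x, g x ∂ν - ∫ x, g x ∂ν' = ∫ x, g x ∂(ν - ν') - ∫ x, g x ∂(ν' - ν) := by linarith
    _ ≤ β * (ν - ν').real univ := integral_sub_integral_le_of_mem_Icc hmass hg hgm
    _ ≤ β * tvDist ν ν' :=
      mul_le_mul_of_nonneg_left (Measure.measureReal_sub_univ_le_tvDist ν ν') hβ

end Integral

lemma measureReal_bind_apply {E F : Type*} [MeasurableSpace E] [MeasurableSpace F]
    (ν : Measure E) (P : Kernel E F) [IsFiniteKernel P] {A : Set F} (hA : MeasurableSet A) :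
    (ν.bind fun x => P x).real A = ∫ x, (P x).real A ∂ν := by
  rw [measureReal_def, Measure.bind_apply hA P.measurable.aemeasurable]
  exact (integral_toReal (P.measurable_coe hA).aemeasurable
    (ae_of_all _ fun x => measure_lt_top _ _)).symm

theorem tvDist_bind_le_of_kernel_tvDist_le_general
    {E F : Type*} [MeasurableSpace E] [MeasurableSpace F]
    (P : Kernel E F) [IsMarkovKernel P]
    (β : ℝ) (hβ0 : 0 ≤ β)
    (hP : ∀ x y : E, tvDist (P x) (P y) ≤ β)
    (ν ν' : Measure E) [IsProbabilityMeasure ν] [IsProbabilityMeasure ν'] :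
    tvDist (ν.bind fun x => P x) (ν'.bind fun x => P x) ≤ β * tvDist ν ν' := by
  have hnn : 0 ≤ β * tvDist ν ν' := mul_nonneg hβ0 (tvDist_nonneg ν ν')
  refine Real.iSup_le (fun A => Real.iSup_le (fun hA => ?_) hnn) hnn
  have hg : Measurable fun x => (P x).real A := (P.measurable_coe hA).ennreal_toReal
  have hosc : ∀ x y, (P x).real A - (P y).real A ≤ β := fun x y =>
    (le_abs_self _).trans ((abs_measureReal_sub_le_tvDist _ _ hA).trans (hP x y))
  change |(ν.bind fun x => P x).real A - (ν'.bind fun x => P x).real A| ≤ _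
  rw [measureReal_bind_apply ν P hA, measureReal_bind_apply ν' P hA, abs_sub_le_iff]
  refine ⟨integral_sub_integral_le_mul_tvDist hg hosc, ?_⟩
  rw [tvDist_comm]
  exact integral_sub_integral_le_mul_tvDist hg hosc

/-- If a Markov kernel `P` from `E` to `F` satisfies
`‖P(x, ·) - P(y, ·)‖_TV ≤ β` for all `x, y ∈ E`, then for any two probability
measures `ν, ν'` on `E`, `‖νP - ν'P‖_TV ≤ β ‖ν - ν'‖_TV`. -/
theorem tvDist_bind_le_of_kernel_tvDist_le
    {E F : Type*} [MeasurableSpace E] [MeasurableSpace F]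
    (P : Kernel E F) [IsMarkovKernel P]
    (β : ℝ) (hβ0 : 0 ≤ β) (hβ1 : β ≤ 1)
    (hP : ∀ x y : E, tvDist (P x) (P y) ≤ β)
    (ν ν' : Measure E) [IsProbabilityMeasure ν] [IsProbabilityMeasure ν'] :
    tvDist (ν.bind fun x => P x) (ν'.bind fun x => P x) ≤ β * tvDist ν ν' :=
  tvDist_bind_le_of_kernel_tvDist_le_general P β hβ0 hP ν ν'
end
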